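/- Let k be a commutative ring, E₀ and E₁ two k-modules, and m ∈ ℕ. For 0 ≤ i ≤ m, regard Σ_{m-i} × Σ_i as a subgroup of Σ_m = Perm (Fin m) via the canonical equivalence Fin (m-i) ⊕ Fin i ≃ Fin m, and let it act on E₀^{⊗(m-i)} ⊗ E₁^{⊗ i} with each factor permuting the corresponding tensor factors. Then there is an isomorphism of k-linear Σ_m-representations ⨂_{j ∈ Fin m} (E₀ ⊕ E₁) ≅ ⨁_{i=0}^{m} Ind_{Σ_{m-i} × Σ_i}^{Σ_m} (E₀^{⊗(m-i)} ⊗ E₁^{⊗ i}), where Σ_m acts on the left-hand side by permuting the tensor factors. -/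

import Mathlib

open Equiv TensorProduct PiTensorProduct DirectSum

/-- The action of `Perm I` on `I → G` by `(σ • g) i = g (σ⁻¹ i)`. -/
def permAut (G : Type*) [Group G] (I : Type*) : Equiv.Perm I →* MulAut (I → G) where
  toFun σ :=
    { toFun := fun g => g ∘ σ.symm
      invFun := fun g => g ∘ σ
      left_inv := fun g => by funext i; simp
      right_inv := fun g => by funext i; simp
      map_mul' := fun g h => rfl }
  map_one' := by ext g i; rfl
  map_mul' := fun σ τ => by ext g i; rfl

/-- The wreath product `G ≀ Σ(I)`. -/
abbrev Wreath (G : Type*) [Group G] (I : Type*) :=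
  (I → G) ⋊[permAut G I] Equiv.Perm I

/-- The wreath tensor-power representation of `G ≀ Σ(I)` on `⨂ (i : I), V`:
the base `I → G` acts factorwise and `Perm I` permutes the tensor factors. -/
noncomputable def wreathRep (R : Type*) [CommRing R] {G : Type*} [Group G] (I : Type*)
    {V : Type*} [AddCommGroup V] [Module R V] (ρ : Representation R G V) :
    Representation R (Wreath G I) (⨂[R] _i : I, V) where
  toFun w :=
    (PiTensorProduct.map fun i => ρ (w.left i)).comp
      (PiTensorProduct.reindex R (fun _ : I => V) w.right).toLinearMap
  map_one' := by
    ext v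
    simp [Equiv.Perm.one_def]
  map_mul' := fun w₁ w₂ => by
    ext v
    simp [permAut, SemidirectProduct.mul_left, SemidirectProduct.mul_right,
      Equiv.Perm.mul_apply, Equiv.Perm.inv_def, Equiv.Perm.mul_def]

section Ind

variable (k : Type*) [CommRing k] {H G : Type*} [Group H] [Group G] (f : H →* G)
  (V : Type*) [AddCommGroup V] [Module k V] (ρ : Representation k H V)

/-- The submodule of relations defining the balanced tensor product
`MonoidAlgebra k G ⊗[MonoidAlgebra k H] V`. -/
noncomputable def indRel : Submodule k (MonoidAlgebra k G ⊗[k] V) :=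
  Submodule.span k {x | ∃ (a : MonoidAlgebra k G) (h : H) (v : V),
    x = (a * MonoidAlgebra.of k G (f h)) ⊗ₜ[k] v - a ⊗ₜ[k] (ρ h v)}

/-- The induced representation `Ind_H^G V = MonoidAlgebra k G ⊗_{MonoidAlgebra k H} V`,
realized as the quotient of `MonoidAlgebra k G ⊗[k] V` by the balancing relations. -/
abbrev Ind : Type _ := (MonoidAlgebra k G ⊗[k] V) ⧸ indRel k f V ρ

theorem indRel_le_comap (g : G) :
    indRel k f V ρ ≤ (indRel k f V ρ).comap
      (LinearMap.rTensor V (LinearMap.mulLeft k (MonoidAlgebra.of k G g))) := by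
  rw [indRel, Submodule.span_le]
  rintro x ⟨a, h, v, rfl⟩
  simp only [SetLike.mem_coe, Submodule.mem_comap, map_sub, LinearMap.rTensor_tmul,
    LinearMap.mulLeft_apply]
  rw [← mul_assoc]
  exact Submodule.subset_span ⟨MonoidAlgebra.of k G g * a, h, v, rfl⟩

/-- The `G`-action on `Ind_H^G V` by left multiplication on the first factor. -/
noncomputable def indRep : Representation k G (Ind k f V ρ) where
  toFun g := Submodule.mapQ _ _
      (LinearMap.rTensor V (LinearMap.mulLeft k (MonoidAlgebra.of k G g)))
      (indRel_le_comap k f V ρ g)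
  map_one' := by
    apply LinearMap.ext
    intro x
    induction x using Submodule.Quotient.induction_on with
    | _ y =>
      simp [Submodule.mapQ_apply, ← MonoidAlgebra.one_def, LinearMap.mulLeft_one]
  map_mul' := fun g₁ g₂ => by
    apply LinearMap.ext
    intro x
    induction x using Submodule.Quotient.induction_on with
    | _ y =>
      simp only [Submodule.mapQ_apply, _root_.map_mul, LinearMap.mulLeft_mul,
        LinearMap.rTensor_comp, LinearMap.comp_apply, Module.End.mul_apply]

end Ind

/-- The embedding `Perm (Fin a) × Perm (Fin b) → Perm (Fin N)` induced by an equivalence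
`e : Fin a ⊕ Fin b ≃ Fin N`. -/
def permPairHom {a b N : ℕ} (e : Fin a ⊕ Fin b ≃ Fin N) :
    Equiv.Perm (Fin a) × Equiv.Perm (Fin b) →* Equiv.Perm (Fin N) where
  toFun p := (e.symm.trans ((p.1.sumCongr p.2).trans e) : Equiv.Perm (Fin N))
  map_one' := by
    ext x
    rcases h : e.symm x with u | u <;> simp [h] <;> simp [← h]
  map_mul' := fun p q => by
    ext x
    rcases h : e.symm x with u | u <;> simp [h, Equiv.Perm.mul_apply]

/-- The representation of `Perm (Fin a) × Perm (Fin b)` on `E₀^{⊗ a} ⊗ E₁^{⊗ b}` in which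
each factor permutes the corresponding tensor factors. -/
noncomputable def pairPermRep (R : Type*) [CommRing R] (a b : ℕ) (E₀ E₁ : Type*)
    [AddCommGroup E₀] [Module R E₀] [AddCommGroup E₁] [Module R E₁] :
    Representation R (Equiv.Perm (Fin a) × Equiv.Perm (Fin b))
      ((⨂[R] _x : Fin a, E₀) ⊗[R] (⨂[R] _x : Fin b, E₁)) where
  toFun p :=
    TensorProduct.map (PiTensorProduct.reindex R (fun _ : Fin a => E₀) p.1).toLinearMap
      (PiTensorProduct.reindex R (fun _ : Fin b => E₁) p.2).toLinearMap
  map_one' := by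
    ext v w
    simp [Equiv.Perm.one_def]
  map_mul' := fun p q => by
    ext v w
    simp [Equiv.Perm.mul_def, Module.End.mul_apply]

variable (k : Type*) [CommRing k] (E₀ E₁ : Type*) [AddCommGroup E₀] [Module k E₀]
  [AddCommGroup E₁] [Module k E₁] (m : ℕ)

/-- The `i`-th summand `Ind_{Σ_{m-i} × Σ_i}^{Σ_m} (E₀^{⊗ (m-i)} ⊗ E₁^{⊗ i})`. -/
noncomputable abbrev IndSummand (i : Fin (m + 1)) : Type _ :=
  Ind k (permPairHom (finSumFinEquiv.trans
      (finCongr (Nat.sub_add_cancel (Nat.lt_succ_iff.mp i.isLt)))))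
    ((⨂[k] _x : Fin (m - (i : ℕ)), E₀) ⊗[k] (⨂[k] _x : Fin ((i : ℕ)), E₁))
    (pairPermRep k (m - (i : ℕ)) (i : ℕ) E₀ E₁)

/-- The action of `σ ∈ Σ_m` on the direct sum of the induced representations,
acting on each summand through `indRep`. -/
noncomputable def sumIndAction (σ : Equiv.Perm (Fin m)) :
    (⨁ i : Fin (m + 1), IndSummand k E₀ E₁ m i) →ₗ[k]
      ⨁ i : Fin (m + 1), IndSummand k E₀ E₁ m i :=
  DirectSum.toModule k _ _ fun i =>
    (DirectSum.lof k (Fin (m + 1)) (IndSummand k E₀ E₁ m) i).comp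
      (indRep k (permPairHom (finSumFinEquiv.trans
          (finCongr (Nat.sub_add_cancel (Nat.lt_succ_iff.mp i.isLt)))))
        ((⨂[k] _x : Fin (m - (i : ℕ)), E₀) ⊗[k] (⨂[k] _x : Fin ((i : ℕ)), E₁))
        (pairPermRep k (m - (i : ℕ)) (i : ℕ) E₀ E₁) σ)

/-!
Reading `E₀ × E₁` as `E₀ ⊕ E₁` and expanding, `⨂_{j < m} (E₀ ⊕ E₁)` is the direct sum over the
subsets `S ⊆ Fin m` of the tensor products with `E₁` at the positions in `S` and `E₀` elsewhere.
A permutation `g` carries the `S`-summand onto the `g(S)`-summand, so for fixed `|S| = i` these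
summands are permuted transitively; the stabiliser of the block of the last `i` positions is
`Σ_{m-i} × Σ_i`, acting on `E₀^{⊗(m-i)} ⊗ E₁^{⊗i}` by permuting factors. Hence they add up to the
induced representation: `g ⊗ w ↦ g · w` is inverted by sending the `S`-component `x` of a tensor
to `σ_S ⊗ σ_S⁻¹ x`, where `σ_S` is a fixed permutation carrying the block onto `S`.
-/

namespace Ind

open MonoidAlgebra

variable {k} {H G : Type*} [Group H] [Group G] (f : H →* G)
  {V : Type*} [AddCommGroup V] [Module k V] (ρ : Representation k H V)

noncomputable def mkOf (g : G) : V →ₗ[k] Ind k f V ρ :=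
  (indRel k f V ρ).mkQ ∘ₗ TensorProduct.mk k (MonoidAlgebra k G) V (of k G g)

variable {f ρ}

theorem mkOf_apply (g : G) (v : V) :
    mkOf f ρ g v = Submodule.Quotient.mk (of k G g ⊗ₜ[k] v) := rfl

theorem mkOf_mul (g : G) (h : H) (v : V) : mkOf f ρ (g * f h) v = mkOf f ρ g (ρ h v) := by
  rw [mkOf_apply, mkOf_apply, Submodule.Quotient.eq, map_mul]
  exact Submodule.subset_span ⟨of k G g, h, v, rfl⟩

theorem indRep_mkOf (g g' : G) (v : V) :
    indRep k f V ρ g (mkOf f ρ g' v) = mkOf f ρ (g * g') v := by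
  simp [indRep, mkOf_apply, Submodule.mapQ_apply]

theorem hom_ext {W : Type*} [AddCommMonoid W] [Module k W] {F F' : Ind k f V ρ →ₗ[k] W}
    (h : ∀ g, F ∘ₗ mkOf f ρ g = F' ∘ₗ mkOf f ρ g) : F = F' := by
  refine LinearMap.ext fun x => Submodule.Quotient.induction_on _ x fun z => ?_
  induction z using TensorProduct.induction_on with
  | zero => simp only [Submodule.Quotient.mk_zero, map_zero]
  | add x y hx hy => simp only [Submodule.Quotient.mk_add, map_add, hx, hy]
  | tmul a v =>
    induction a using MonoidAlgebra.induction_linear with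
    | zero => simp only [TensorProduct.zero_tmul, Submodule.Quotient.mk_zero, map_zero]
    | add a b ha hb =>
      simp only [TensorProduct.add_tmul, Submodule.Quotient.mk_add, map_add, ha, hb]
    | single g c =>
      have hc : single g c = c • of k G g := by simp [MonoidAlgebra.of_apply]
      rw [hc, ← TensorProduct.smul_tmul', Submodule.Quotient.mk_smul, map_smul, map_smul]
      exact congrArg (c • ·) (LinearMap.congr_fun (h g) v)

variable {W : Type*} [AddCommGroup W] [Module k W] (π : Representation k G W) (φ : V →ₗ[k] W)
  (hφ : ∀ h v, φ (ρ h v) = π (f h) (φ v))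

noncomputable def lift : Ind k f V ρ →ₗ[k] W :=
  (indRel k f V ρ).liftQ
    (TensorProduct.lift ((LinearMap.llcomp k V W W).flip φ ∘ₗ π.asAlgebraHom.toLinearMap)) <| by
    rw [indRel, Submodule.span_le]
    rintro _ ⟨a, h, v, rfl⟩
    simp [hφ]

theorem lift_mkOf (g : G) (v : V) : lift π φ hφ (mkOf f ρ g v) = π g (φ v) := by
  simp [lift, mkOf_apply]

theorem lift_indRep (g : G) (x : Ind k f V ρ) :
    lift π φ hφ (indRep k f V ρ g x) = π g (lift π φ hφ x) := by
  have : lift π φ hφ ∘ₗ indRep k f V ρ g = π g ∘ₗ lift π φ hφ :=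
    hom_ext fun g' => LinearMap.ext fun v => by simp [indRep_mkOf, lift_mkOf]
  exact LinearMap.congr_fun this x

end Ind

section Split

variable (R : Type*) [CommSemiring R] (M N : Type*) [AddCommMonoid M] [Module R M]
  [AddCommMonoid N] [Module R N] {ι α β α' β' : Type*}

noncomputable def splitIncl (e : α ⊕ β ≃ ι) :
    (⨂[R] _ : α, M) ⊗[R] (⨂[R] _ : β, N) →ₗ[R] ⨂[R] _ : ι, M × N :=
  (reindex R (fun _ => M × N) e).toLinearMap ∘ₗ (tmulEquiv R (M × N)).toLinearMap ∘ₗ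
    TensorProduct.map (PiTensorProduct.map fun _ => LinearMap.inl R M N)
      (PiTensorProduct.map fun _ => LinearMap.inr R M N)

noncomputable def splitProj (e : α ⊕ β ≃ ι) :
    (⨂[R] _ : ι, M × N) →ₗ[R] (⨂[R] _ : α, M) ⊗[R] (⨂[R] _ : β, N) :=
  TensorProduct.map (PiTensorProduct.map fun _ => LinearMap.fst R M N)
      (PiTensorProduct.map fun _ => LinearMap.snd R M N) ∘ₗ
    (tmulEquiv R (M × N)).symm.toLinearMap ∘ₗ (reindex R (fun _ => M × N) e.symm).toLinearMap

theorem splitIncl_tprod_tmul_tprod (e : α ⊕ β ≃ ι) (u : α → M) (t : β → N) :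
    splitIncl R M N e ((⨂ₜ[R] x, u x) ⊗ₜ (⨂ₜ[R] y, t y)) =
      ⨂ₜ[R] l, Sum.elim (fun x => (u x, 0)) (fun y => (0, t y)) (e.symm l) := by
  simp only [splitIncl, LinearMap.coe_comp, LinearEquiv.coe_coe, Function.comp_apply,
    TensorProduct.map_tmul, map_tprod, tmulEquiv_apply, reindex_tprod]
  rfl

theorem splitProj_tprod (e : α ⊕ β ≃ ι) (v : ι → M × N) :
    splitProj R M N e (⨂ₜ[R] l, v l) =
      (⨂ₜ[R] x, (v (e (.inl x))).1) ⊗ₜ (⨂ₜ[R] y, (v (e (.inr y))).2) := by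
  simp [splitProj, reindex_tprod, tmulEquiv_symm_apply]

theorem splitProj_splitIncl (e : α ⊕ β ≃ ι) (w : (⨂[R] _ : α, M) ⊗[R] (⨂[R] _ : β, N)) :
    splitProj R M N e (splitIncl R M N e w) = w := by
  suffices splitProj R M N e ∘ₗ splitIncl R M N e = LinearMap.id from
    LinearMap.congr_fun this w
  ext u t
  simp [splitIncl_tprod_tmul_tprod, splitProj_tprod]

theorem splitProj_splitIncl_eq_zero (e : α ⊕ β ≃ ι) (e' : α' ⊕ β' ≃ ι) {l : ι}
    (hl : (e.symm l).isRight ≠ (e'.symm l).isRight)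
    (w : (⨂[R] _ : α, M) ⊗[R] (⨂[R] _ : β, N)) :
    splitProj R M N e' (splitIncl R M N e w) = 0 := by
  suffices splitProj R M N e' ∘ₗ splitIncl R M N e = 0 from LinearMap.congr_fun this w
  ext u t
  simp only [LinearMap.compMultilinearMap_apply, AlgebraTensorModule.curry_apply,
    TensorProduct.curry_apply, LinearMap.coe_restrictScalars, LinearMap.comp_apply,
    splitIncl_tprod_tmul_tprod, splitProj_tprod, LinearMap.zero_apply]
  rcases he : e.symm l with x | y <;> rcases he' : e'.symm l with x' | y' <;>
    simp only [he, he', Sum.isRight_inl, Sum.isRight_inr, ne_eq, not_true_eq_false] at hl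
  · have hl' : e' (.inr y') = l := by rw [← he', Equiv.apply_symm_apply]
    rw [(PiTensorProduct.tprod R).map_coord_zero y' (by simp [hl', he]), TensorProduct.tmul_zero]
  · have hl' : e' (.inl x') = l := by rw [← he', Equiv.apply_symm_apply]
    rw [(PiTensorProduct.tprod R).map_coord_zero x' (by simp [hl', he]), TensorProduct.zero_tmul]

theorem reindex_splitIncl (e : α ⊕ β ≃ ι) (σ : ι ≃ ι')
    (w : (⨂[R] _ : α, M) ⊗[R] (⨂[R] _ : β, N)) :
    reindex R (fun _ => M × N) σ (splitIncl R M N e w) = splitIncl R M N (e.trans σ) w := by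
  simp only [splitIncl, LinearMap.comp_apply, LinearEquiv.coe_coe]
  exact reindex_reindex e σ _

theorem splitIncl_sumCongr_trans (e : α ⊕ β ≃ ι) (p : Perm α) (q : Perm β)
    (w : (⨂[R] _ : α, M) ⊗[R] (⨂[R] _ : β, N)) :
    splitIncl R M N ((p.sumCongr q).trans e) w =
      splitIncl R M N e (TensorProduct.map (reindex R (fun _ => M) p).toLinearMap
        (reindex R (fun _ => N) q).toLinearMap w) := by
  suffices splitIncl R M N ((p.sumCongr q).trans e) = splitIncl R M N e ∘ₗ
      TensorProduct.map (reindex R (fun _ => M) p).toLinearMap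
        (reindex R (fun _ => N) q).toLinearMap from LinearMap.congr_fun this w
  ext u t
  simp only [LinearMap.compMultilinearMap_apply, AlgebraTensorModule.curry_apply,
    TensorProduct.curry_apply, LinearMap.coe_restrictScalars, LinearMap.comp_apply,
    TensorProduct.map_tmul, LinearEquiv.coe_coe, reindex_tprod, splitIncl_tprod_tmul_tprod]
  congr 1
  funext l
  simp only [Equiv.symm_trans_apply]
  rcases e.symm l with x | y <;> simp

theorem splitIncl_splitProj_tprod (e : α ⊕ β ≃ ι) (v : ι → M × N) :
    splitIncl R M N e (splitProj R M N e (⨂ₜ[R] l, v l)) =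
      ⨂ₜ[R] l, if (e.symm l).isRight then (0, (v l).2) else ((v l).1, 0) := by
  rw [splitProj_tprod, splitIncl_tprod_tmul_tprod]
  congr 1
  funext l
  rcases he : e.symm l with x | y <;> simp [← (e.symm_apply_eq).mp he]

end Split

theorem Equiv.exists_sumCongr_trans_eq {ι α β : Type*} [Finite α] [Finite β] (e e' : α ⊕ β ≃ ι)
    (h : ∀ l, (e.symm l).isRight = (e'.symm l).isRight) :
    ∃ (p : Perm α) (q : Perm β), (p.sumCongr q).trans e' = e := by
  have hmaps : Set.MapsTo (e.trans e'.symm) (Set.range Sum.inl) (Set.range Sum.inl) := by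
    rintro _ ⟨x, rfl⟩
    have hx := h (e (.inl x))
    rw [Equiv.symm_apply_apply, Sum.isRight_inl, eq_comm, Sum.isRight_eq_false] at hx
    exact Sum.isLeft_iff.mp hx |>.imp fun _ hy => hy.symm
  obtain ⟨⟨p, q⟩, hpq⟩ := Perm.mem_sumCongrHom_range_of_perm_mapsTo_inl hmaps
  refine ⟨p, q, ?_⟩
  replace hpq : p.sumCongr q = e.trans e'.symm := hpq
  ext l
  simp [hpq]

section FinsetSplit

variable {ι : Type*} [Fintype ι]

noncomputable def finsetSplitEquiv [DecidableEq ι] (S : Finset ι) {a b : ℕ} (ha : Sᶜ.card = a)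
    (hb : S.card = b) : Fin a ⊕ Fin b ≃ ι :=
  (Equiv.sumCongr ((Finset.equivFinOfCardEq ha).symm.trans
      (Equiv.subtypeEquivRight fun _ => Finset.mem_compl)) (Finset.equivFinOfCardEq hb).symm).trans
    ((Equiv.sumComm _ _).trans (Equiv.sumCompl (· ∈ S)))

theorem isRight_finsetSplitEquiv_symm [DecidableEq ι] (S : Finset ι) {a b : ℕ}
    (ha : Sᶜ.card = a) (hb : S.card = b) (l : ι) :
    ((finsetSplitEquiv S ha hb).symm l).isRight ↔ l ∈ S := by
  by_cases hl : l ∈ S <;> simp [finsetSplitEquiv, hl]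

theorem Equiv.card_filter_isRight_symm {α β : Type*} [Fintype β] (e : α ⊕ β ≃ ι) :
    (Finset.univ.filter fun l => (e.symm l).isRight).card = Fintype.card β := by
  rw [← Finset.card_univ, ← Finset.card_map ⟨fun y => e (.inr y), fun _ _ h => by simpa using h⟩]
  congr 1
  ext l
  simp only [Finset.mem_filter, Finset.mem_univ, true_and, Finset.mem_map,
    Sum.isRight_iff, Equiv.symm_apply_eq]
  exact exists_congr fun _ => eq_comm

theorem forall_isRight_eq_iff_eq_filter [DecidableEq ι] {α β : Type*} (e : α ⊕ β ≃ ι)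
    (S : Finset ι) {a b : ℕ} (ha : Sᶜ.card = a) (hb : S.card = b) :
    (∀ l, (e.symm l).isRight = ((finsetSplitEquiv S ha hb).symm l).isRight) ↔
      S = Finset.univ.filter fun l => (e.symm l).isRight := by
  constructor
  · intro h
    ext l
    rw [Finset.mem_filter, ← isRight_finsetSplitEquiv_symm S ha hb, h l]
    simp
  · intro hS l
    rw [Bool.eq_iff_iff, isRight_finsetSplitEquiv_symm, hS]
    simp

end FinsetSplit

noncomputable def reindexRep (R ι M : Type*) [CommSemiring R] [AddCommMonoid M] [Module R M] :
    Representation R (Perm ι) (⨂[R] _ : ι, M) where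
  toFun σ := (reindex R (fun _ => M) σ).toLinearMap
  map_one' := by ext; simp [Perm.one_def]
  map_mul' σ τ := LinearMap.ext fun x => (reindex_reindex τ σ x).symm

theorem reindexRep_apply (R ι M : Type*) [CommSemiring R] [AddCommMonoid M] [Module R M]
    (σ : Perm ι) (x : ⨂[R] _ : ι, M) : reindexRep R ι M σ x = reindex R (fun _ => M) σ x := rfl

section PermPair

variable {a b N : ℕ}

theorem reindex_permPairHom_splitIncl (e : Fin a ⊕ Fin b ≃ Fin N)
    (h : Perm (Fin a) × Perm (Fin b)) (w : (⨂[k] _ : Fin a, E₀) ⊗[k] (⨂[k] _ : Fin b, E₁)) :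
    reindex k (fun _ => E₀ × E₁) (permPairHom e h) (splitIncl k E₀ E₁ e w) =
      splitIncl k E₀ E₁ e (pairPermRep k a b E₀ E₁ h w) := by
  have he : e.trans (permPairHom e h) = (h.1.sumCongr h.2).trans e := by
    ext x
    simp [permPairHom]
  rw [reindex_splitIncl, he, splitIncl_sumCongr_trans]
  rfl

theorem symm_trans_mul_permPairHom (e₀ e : Fin a ⊕ Fin b ≃ Fin N) (p : Perm (Fin a))
    (q : Perm (Fin b)) :
    (e₀.symm.trans e : Perm (Fin N)) * permPairHom e₀ (p, q) =
      e₀.symm.trans ((p.sumCongr q).trans e) := by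
  ext x
  simp [permPairHom, Perm.mul_apply]

end PermPair

theorem sum_sum_subtype_card_eq {M : Type*} [AddCommMonoid M] (f : Finset (Fin m) → M) :
    ∑ i : Fin (m + 1), ∑ S : {S : Finset (Fin m) // S.card = (i : ℕ)}, f S = ∑ S, f S := by
  rw [← Fintype.sum_fiberwise (fun S : Finset (Fin m) =>
    (⟨S.card, Nat.lt_succ_of_le (card_finset_fin_le S)⟩ : Fin (m + 1))) f]
  refine Finset.sum_congr rfl fun i _ => ?_
  exact Fintype.sum_equiv (Equiv.subtypeEquivRight fun S => by simp [Fin.ext_iff]) _ _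
    fun _ => rfl

abbrev blockEquiv (i : Fin (m + 1)) : Fin (m - (i : ℕ)) ⊕ Fin (i : ℕ) ≃ Fin m :=
  finSumFinEquiv.trans (finCongr (Nat.sub_add_cancel (Nat.lt_succ_iff.mp i.isLt)))

variable {m} in
noncomputable def subsetSplitEquiv {i : Fin (m + 1)}
    (S : {S : Finset (Fin m) // S.card = (i : ℕ)}) :
    Fin (m - (i : ℕ)) ⊕ Fin (i : ℕ) ≃ Fin m :=
  finsetSplitEquiv S.1 (by simp [Finset.card_compl, S.2]) S.2

noncomputable def sumIndToTensor :
    (⨁ i : Fin (m + 1), IndSummand k E₀ E₁ m i) →ₗ[k] ⨂[k] _ : Fin m, E₀ × E₁ :=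
  DirectSum.toModule k _ _ fun i => Ind.lift (reindexRep k (Fin m) (E₀ × E₁))
    (splitIncl k E₀ E₁ (blockEquiv m i)) fun h w => by
      rw [reindexRep_apply, reindex_permPairHom_splitIncl]

-- `(blockEquiv m i).symm.trans (subsetSplitEquiv S)` is the permutation `σ_S`.
noncomputable def tensorToSumInd :
    (⨂[k] _ : Fin m, E₀ × E₁) →ₗ[k] ⨁ i : Fin (m + 1), IndSummand k E₀ E₁ m i :=
  ∑ i : Fin (m + 1), ∑ S : {S : Finset (Fin m) // S.card = (i : ℕ)},
    DirectSum.lof k _ (IndSummand k E₀ E₁ m) i ∘ₗ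
      Ind.mkOf _ _ ((blockEquiv m i).symm.trans (subsetSplitEquiv S)) ∘ₗ
        splitProj k E₀ E₁ (subsetSplitEquiv S)

theorem sumIndToTensor_lof_mkOf (i : Fin (m + 1)) (g : Perm (Fin m))
    (w : (⨂[k] _ : Fin (m - (i : ℕ)), E₀) ⊗[k] (⨂[k] _ : Fin (i : ℕ), E₁)) :
    sumIndToTensor k E₀ E₁ m (DirectSum.lof k _ (IndSummand k E₀ E₁ m) i (Ind.mkOf _ _ g w)) =
      splitIncl k E₀ E₁ ((blockEquiv m i).trans g) w := by
  rw [sumIndToTensor, DirectSum.toModule_lof, Ind.lift_mkOf, reindexRep_apply, reindex_splitIncl]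

theorem sumIndToTensor_tensorToSumInd (x : ⨂[k] _ : Fin m, E₀ × E₁) :
    sumIndToTensor k E₀ E₁ m (tensorToSumInd k E₀ E₁ m x) = x := by
  suffices sumIndToTensor k E₀ E₁ m ∘ₗ tensorToSumInd k E₀ E₁ m = LinearMap.id from
    LinearMap.congr_fun this x
  ext v
  simp only [tensorToSumInd, LinearMap.compMultilinearMap_apply, LinearMap.comp_apply,
    LinearMap.sum_apply, map_sum, sumIndToTensor_lof_mkOf, ← Equiv.trans_assoc,
    Equiv.self_trans_symm, Equiv.refl_trans, splitIncl_splitProj_tprod, subsetSplitEquiv,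
    isRight_finsetSplitEquiv_symm, LinearMap.id_apply]
  rw [sum_sum_subtype_card_eq m fun S => ⨂ₜ[k] l, if l ∈ S then (0, (v l).2) else ((v l).1, 0)]
  have hv : v = (fun l => (0, (v l).2)) + fun l => ((v l).1, 0) := by
    ext l <;> simp
  conv_rhs => rw [hv, MultilinearMap.map_add_univ]
  rfl

theorem splitProj_subsetSplitEquiv_splitIncl_eq_zero {α β : Type*} {j : Fin (m + 1)}
    (S : {S : Finset (Fin m) // S.card = (j : ℕ)}) (e : α ⊕ β ≃ Fin m)
    (hS : S.1 ≠ Finset.univ.filter fun l => (e.symm l).isRight)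
    (w : (⨂[k] _ : α, E₀) ⊗[k] (⨂[k] _ : β, E₁)) :
    splitProj k E₀ E₁ (subsetSplitEquiv S) (splitIncl k E₀ E₁ e w) = 0 := by
  obtain ⟨l, hl⟩ := not_forall.mp (mt (forall_isRight_eq_iff_eq_filter e S.1 _ _).mp hS)
  exact splitProj_splitIncl_eq_zero k E₀ E₁ e _ hl w

-- The hypothesis says that `g` and `σ_S` both carry the block onto `S`, so they lie in the same
-- coset of `Σ_{m-i} × Σ_i`.
theorem mkOf_splitProj_splitIncl {i : Fin (m + 1)} (S : {S : Finset (Fin m) // S.card = (i : ℕ)})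
    (g : Perm (Fin m))
    (hS : ∀ l, (((blockEquiv m i).trans g).symm l).isRight = ((subsetSplitEquiv S).symm l).isRight)
    (w : (⨂[k] _ : Fin (m - (i : ℕ)), E₀) ⊗[k] (⨂[k] _ : Fin (i : ℕ), E₁)) :
    Ind.mkOf (permPairHom (blockEquiv m i)) (pairPermRep k (m - (i : ℕ)) i E₀ E₁)
        ((blockEquiv m i).symm.trans (subsetSplitEquiv S))
        (splitProj k E₀ E₁ (subsetSplitEquiv S) (splitIncl k E₀ E₁ ((blockEquiv m i).trans g) w)) =
      Ind.mkOf (permPairHom (blockEquiv m i)) (pairPermRep k (m - (i : ℕ)) i E₀ E₁) g w := by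
  obtain ⟨p, q, hpq⟩ := Equiv.exists_sumCongr_trans_eq _ _ hS
  have hg : g = (blockEquiv m i).symm.trans (subsetSplitEquiv S) *
      permPairHom (blockEquiv m i) (p, q) := by
    rw [symm_trans_mul_permPairHom, hpq, ← Equiv.trans_assoc, Equiv.symm_trans_self,
      Equiv.refl_trans]
  rw [← hpq, splitIncl_sumCongr_trans, splitProj_splitIncl, hg, Ind.mkOf_mul]
  rfl

theorem tensorToSumInd_sumIndToTensor (y : ⨁ i : Fin (m + 1), IndSummand k E₀ E₁ m i) :
    tensorToSumInd k E₀ E₁ m (sumIndToTensor k E₀ E₁ m y) = y := by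
  suffices tensorToSumInd k E₀ E₁ m ∘ₗ sumIndToTensor k E₀ E₁ m = LinearMap.id from
    LinearMap.congr_fun this y
  refine DirectSum.linearMap_ext k fun i => ?_
  apply Ind.hom_ext
  intro g
  refine LinearMap.ext fun w => ?_
  simp only [LinearMap.comp_apply, sumIndToTensor_lof_mkOf, LinearMap.id_apply]
  set e := (blockEquiv m i).trans g
  set S₀ := Finset.univ.filter fun l => (e.symm l).isRight
  have hS₀ : S₀.card = (i : ℕ) := (Equiv.card_filter_isRight_symm e).trans (Fintype.card_fin _)
  simp only [tensorToSumInd, LinearMap.sum_apply, LinearMap.comp_apply]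
  rw [Finset.sum_eq_single i, Finset.sum_eq_single ⟨S₀, hS₀⟩,
    mkOf_splitProj_splitIncl k E₀ E₁ m ⟨S₀, hS₀⟩ g]
  · exact (forall_isRight_eq_iff_eq_filter e S₀ _ _).mpr rfl
  · intro S _ hS
    rw [splitProj_subsetSplitEquiv_splitIncl_eq_zero k E₀ E₁ m S e
      fun h => hS (Subtype.ext h), map_zero, map_zero]
  · simp
  · intro j _ hj
    refine Finset.sum_eq_zero fun S _ => ?_
    have hS : S.1 ≠ S₀ := fun h => hj (Fin.ext (S.2.symm.trans (h ▸ hS₀)))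
    rw [splitProj_subsetSplitEquiv_splitIncl_eq_zero k E₀ E₁ m S e hS, map_zero, map_zero]
  · simp

theorem sumIndToTensor_sumIndAction (σ : Perm (Fin m))
    (y : ⨁ i : Fin (m + 1), IndSummand k E₀ E₁ m i) :
    sumIndToTensor k E₀ E₁ m (sumIndAction k E₀ E₁ m σ y) =
      reindex k (fun _ => E₀ × E₁) σ (sumIndToTensor k E₀ E₁ m y) := by
  suffices sumIndToTensor k E₀ E₁ m ∘ₗ sumIndAction k E₀ E₁ m σ =
      reindexRep k (Fin m) (E₀ × E₁) σ ∘ₗ sumIndToTensor k E₀ E₁ m from LinearMap.congr_fun this y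
  refine DirectSum.linearMap_ext k fun i => LinearMap.ext fun z => ?_
  simp only [LinearMap.comp_apply, sumIndAction, sumIndToTensor, DirectSum.toModule_lof,
    Ind.lift_indRep]

theorem statement6 :
    ∃ Φ : (⨂[k] _j : Fin m, (E₀ × E₁)) ≃ₗ[k] ⨁ i : Fin (m + 1), IndSummand k E₀ E₁ m i,
      ∀ (σ : Equiv.Perm (Fin m)) (x : ⨂[k] _j : Fin m, (E₀ × E₁)),
        Φ (PiTensorProduct.reindex k (fun _ : Fin m => E₀ × E₁) σ x) =
          sumIndAction k E₀ E₁ m σ (Φ x) := by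
  refine ⟨.ofLinearMap (tensorToSumInd k E₀ E₁ m) (sumIndToTensor k E₀ E₁ m)
    (LinearMap.ext (tensorToSumInd_sumIndToTensor k E₀ E₁ m))
    (LinearMap.ext (sumIndToTensor_tensorToSumInd k E₀ E₁ m)), fun σ x => ?_⟩
  calc tensorToSumInd k E₀ E₁ m (reindex k _ σ x)
      = tensorToSumInd k E₀ E₁ m
          (reindex k _ σ (sumIndToTensor k E₀ E₁ m (tensorToSumInd k E₀ E₁ m x))) := by
        rw [sumIndToTensor_tensorToSumInd]
    _ = sumIndAction k E₀ E₁ m σ (tensorToSumInd k E₀ E₁ m x) := by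
        rw [← sumIndToTensor_sumIndAction, tensorToSumInd_sumIndToTensor]
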